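/- arXiv:2001.07397 — 11 statements merged into one kernel-verified Lean document; each statement's English description precedes it below -/
import Mathlib

section
/- Let X be a T0 space and let 𝒜 be a family of subsets of X that is ≪-filtered (for any A₁, A₂ ∈ 𝒜 there is A₃ ∈ 𝒜 with A₃ ≪ A₁ and A₃ ≪ A₂). If C is a closed subset of X intersecting every member of 𝒜, then C contains a closed subset F, minimal among closed sets intersecting every member of 𝒜, and any such minimal F is irreducible. -/
open Set

def RelCpt {X : Type*} [TopologicalSpace X] (A B : Set X) : Prop :=
  A ⊆ B ∧ ∀ 𝒰 : Set (Set X), (∀ U ∈ 𝒰, IsOpen U) → B ⊆ ⋃₀ 𝒰 →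
    ∃ 𝒱 ⊆ 𝒰, 𝒱.Finite ∧ A ⊆ ⋃₀ 𝒱

def Saturated {X : Type*} [TopologicalSpace X] (A : Set X) : Prop :=
  A = ⋂₀ {U : Set X | IsOpen U ∧ A ⊆ U}

def WellFiltered (X : Type*) [TopologicalSpace X] : Prop :=
  ∀ 𝒦 : Set (Set X), 𝒦.Nonempty →
    (∀ K ∈ 𝒦, IsCompact K ∧ Saturated K) →
    (∀ K₁ ∈ 𝒦, ∀ K₂ ∈ 𝒦, ∃ K₃ ∈ 𝒦, K₃ ⊆ K₁ ∧ K₃ ⊆ K₂) →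
    ∀ U : Set X, IsOpen U → ⋂₀ 𝒦 ⊆ U → ∃ K ∈ 𝒦, K ⊆ U

def OmegaWellFiltered (X : Type*) [TopologicalSpace X] : Prop :=
  ∀ K : ℕ → Set X, (∀ n, IsCompact (K n) ∧ Saturated (K n)) →
    (∀ m n : ℕ, ∃ k, K k ⊆ K m ∧ K k ⊆ K n) →
    ∀ U : Set X, IsOpen U → (⋂ n, K n) ⊆ U → ∃ n, K n ⊆ U

def SatWellFiltered (X : Type*) [TopologicalSpace X] : Prop :=
  ∀ 𝒜 : Set (Set X), 𝒜.Nonempty →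
    (∀ A ∈ 𝒜, Saturated A) →
    (∀ A₁ ∈ 𝒜, ∀ A₂ ∈ 𝒜, ∃ A₃ ∈ 𝒜, RelCpt A₃ A₁ ∧ RelCpt A₃ A₂) →
    ∀ U : Set X, IsOpen U → ⋂₀ 𝒜 ⊆ U → ∃ A ∈ 𝒜, A ⊆ U

def SatOmegaWellFiltered (X : Type*) [TopologicalSpace X] : Prop :=
  ∀ A : ℕ → Set X, (∀ n, Saturated (A n)) →
    (∀ m n : ℕ, ∃ k, RelCpt (A k) (A m) ∧ RelCpt (A k) (A n)) →
    ∀ U : Set X, IsOpen U → (⋂ n, A n) ⊆ U → ∃ n, A n ⊆ U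

def OpenWellFiltered (X : Type*) [TopologicalSpace X] : Prop :=
  ∀ 𝒜 : Set (Set X), 𝒜.Nonempty →
    (∀ A ∈ 𝒜, IsOpen A) →
    (∀ A₁ ∈ 𝒜, ∀ A₂ ∈ 𝒜, ∃ A₃ ∈ 𝒜, RelCpt A₃ A₁ ∧ RelCpt A₃ A₂) →
    ∀ U : Set X, IsOpen U → ⋂₀ 𝒜 ⊆ U → ∃ A ∈ 𝒜, A ⊆ U

def OpenOmegaWellFiltered (X : Type*) [TopologicalSpace X] : Prop :=
  ∀ A : ℕ → Set X, (∀ n, IsOpen (A n)) →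
    (∀ m n : ℕ, ∃ k, RelCpt (A k) (A m) ∧ RelCpt (A k) (A n)) →
    ∀ U : Set X, IsOpen U → (⋂ n, A n) ⊆ U → ∃ n, A n ⊆ U

def CoreCompact (X : Type*) [TopologicalSpace X] : Prop :=
  ∀ (x : X) (U : Set X), IsOpen U → x ∈ U → ∃ V : Set X, IsOpen V ∧ x ∈ V ∧ RelCpt V U

def Sober (X : Type*) [TopologicalSpace X] : Prop :=
  ∀ F : Set X, IsClosed F → F.Nonempty →
    (∀ F₁ F₂ : Set X, IsClosed F₁ → IsClosed F₂ → F ⊆ F₁ ∪ F₂ → F ⊆ F₁ ∨ F ⊆ F₂) →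
    ∃! x : X, F = closure {x}

/-! A chain of closed sets each meeting every member of `𝒜` has an intersection with the same
property: given `A ∈ 𝒜`, pick `A' ∈ 𝒜` with `A' ≪ A`; if the intersection missed `A`, the
complements of the chain would cover `A`, finitely many of them would cover `A'`, and the smallest
of the corresponding chain members would miss `A'`. So Zorn's lemma gives a minimal `F ⊆ C`.
If such an `F` lay in `F₁ ∪ F₂` but in neither, the proper closed subsets `F ∩ F₁`, `F ∩ F₂` would
miss some `A₁`, `A₂ ∈ 𝒜`, while `F` meets a common `A₃ ≪ A₁, A₂`. -/

section

variable {X : Type*} [TopologicalSpace X]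

theorem RelCpt.elim_finite_subfamily_closed {ι : Type*} {A' A : Set X} (h : RelCpt A' A)
    (t : ι → Set X) (htc : ∀ i, IsClosed (t i)) (hst : A ∩ ⋂ i, t i = ∅) :
    ∃ u : Finset ι, A' ∩ ⋂ i ∈ u, t i = ∅ := by
  have hcover : A ⊆ ⋃₀ ((fun i => (t i)ᶜ) '' univ) := by
    rw [sUnion_image, biUnion_univ, ← compl_iInter, subset_compl_iff_disjoint_right,
      disjoint_iff_inter_eq_empty, hst]
  obtain ⟨𝒱, h𝒱, h𝒱fin, hA'⟩ :=
    h.2 _ (forall_mem_image.2 fun i _ => (htc i).isOpen_compl) hcover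
  obtain ⟨s, -, hsfin, hA'⟩ := exists_subset_image_finite_and (p := fun 𝒱 => A' ⊆ ⋃₀ 𝒱) |>.1
    ⟨𝒱, h𝒱, h𝒱fin, hA'⟩
  refine ⟨hsfin.toFinset, ?_⟩
  simp only [Finite.mem_toFinset]
  rwa [sUnion_image, ← compl_iInter₂, subset_compl_iff_disjoint_right,
    disjoint_iff_inter_eq_empty] at hA'

theorem RelCpt.elim_directed_family_closed {ι : Type*} [Nonempty ι] {A' A : Set X}
    (h : RelCpt A' A) (t : ι → Set X) (htc : ∀ i, IsClosed (t i)) (hst : A ∩ ⋂ i, t i = ∅)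
    (hdt : Directed (· ⊇ ·) t) : ∃ i, A' ∩ t i = ∅ := by
  obtain ⟨u, hu⟩ := h.elim_finite_subfamily_closed t htc hst
  obtain ⟨z, hz⟩ := hdt.finset_le u
  exact ⟨z, subset_empty_iff.1 <| hu ▸ inter_subset_inter_right _ (subset_iInter₂ hz)⟩

theorem RelCpt.sInter_inter_nonempty_of_directedOn {A' A : Set X} (h : RelCpt A' A)
    {c : Set (Set X)} (hc : DirectedOn (· ⊇ ·) c) (hne : c.Nonempty)
    (hcl : ∀ F ∈ c, IsClosed F) (hmeets : ∀ F ∈ c, (F ∩ A').Nonempty) :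
    (⋂₀ c ∩ A).Nonempty := by
  have : Nonempty c := hne.to_subtype
  by_contra hempty
  obtain ⟨⟨F, hF⟩, hFA'⟩ := h.elim_directed_family_closed (fun F : c => F.1)
    (fun F => hcl F F.2) (by rwa [inter_comm, ← sInter_eq_iInter, ← not_nonempty_iff_eq_empty])
    (directedOn_iff_directed.1 hc)
  exact (hmeets F hF).ne_empty (inter_comm F A' ▸ hFA')

variable {𝒜 : Set (Set X)}

theorem exists_minimal_closed_inter_nonempty_subset
    (h𝒜 : ∀ A ∈ 𝒜, ∃ A' ∈ 𝒜, RelCpt A' A) {C : Set X} (hC : IsClosed C)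
    (hmeets : ∀ A ∈ 𝒜, (C ∩ A).Nonempty) :
    ∃ F ⊆ C, Minimal (fun F => IsClosed F ∧ ∀ A ∈ 𝒜, (F ∩ A).Nonempty) F := by
  refine zorn_superset_nonempty _ (fun c hcS hc hne => ?_) C ⟨hC, hmeets⟩
  refine ⟨⋂₀ c, ⟨isClosed_sInter fun F hF => (hcS hF).1, fun A hA => ?_⟩,
    fun F hF => sInter_subset_of_mem hF⟩
  obtain ⟨A', hA', hA'A⟩ := h𝒜 A hA
  exact hA'A.sInter_inter_nonempty_of_directedOn
    (IsChain.directedOn (r := fun x y : Set X => y ⊆ x) hc.symm) hne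
    (fun F hF => (hcS hF).1) fun F hF => (hcS hF).2 A' hA'

theorem exists_inter_inter_eq_empty_of_minimal {F G : Set X}
    (hF : Minimal (fun F => IsClosed F ∧ ∀ A ∈ 𝒜, (F ∩ A).Nonempty) F) (hG : IsClosed G)
    (hFG : ¬F ⊆ G) : ∃ A ∈ 𝒜, F ∩ G ∩ A = ∅ := by
  by_contra! hmeets
  exact hFG <| inter_eq_left.1 <|
    hF.eq_of_subset ⟨hF.prop.1.inter hG, hmeets⟩ inter_subset_left

theorem isIrreducible_of_minimal_closed_inter_nonempty (hne : 𝒜.Nonempty)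
    (h𝒜 : ∀ A₁ ∈ 𝒜, ∀ A₂ ∈ 𝒜, ∃ A₃ ∈ 𝒜, RelCpt A₃ A₁ ∧ RelCpt A₃ A₂) {F : Set X}
    (hF : Minimal (fun F => IsClosed F ∧ ∀ A ∈ 𝒜, (F ∩ A).Nonempty) F) :
    IsIrreducible F := by
  obtain ⟨A₀, hA₀⟩ := hne
  refine ⟨(hF.prop.2 A₀ hA₀).mono inter_subset_left,
    isPreirreducible_iff_isClosed_union_isClosed.2 fun F₁ F₂ h₁ h₂ hF₁₂ => ?_⟩
  by_contra! hout
  obtain ⟨A₁, hA₁, hF₁A₁⟩ := exists_inter_inter_eq_empty_of_minimal hF h₁ hout.1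
  obtain ⟨A₂, hA₂, hF₂A₂⟩ := exists_inter_inter_eq_empty_of_minimal hF h₂ hout.2
  obtain ⟨A₃, hA₃, hA₃A₁, hA₃A₂⟩ := h𝒜 A₁ hA₁ A₂ hA₂
  obtain ⟨x, hxF, hxA₃⟩ := hF.prop.2 A₃ hA₃
  rcases hF₁₂ hxF with hx₁ | hx₂
  · exact hF₁A₁.subset ⟨⟨hxF, hx₁⟩, hA₃A₁.1 hxA₃⟩
  · exact hF₂A₂.subset ⟨⟨hxF, hx₂⟩, hA₃A₂.1 hxA₃⟩

end

theorem stmt1_general (X : Type*) [TopologicalSpace X]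
    (𝒜 : Set (Set X)) (hne : 𝒜.Nonempty)
    (hfilt : ∀ A₁ ∈ 𝒜, ∀ A₂ ∈ 𝒜, ∃ A₃ ∈ 𝒜, RelCpt A₃ A₁ ∧ RelCpt A₃ A₂)
    (C : Set X) (hC : IsClosed C) (hmeets : ∀ A ∈ 𝒜, (C ∩ A).Nonempty) :
    (∃ F : Set X, F ⊆ C ∧ IsClosed F ∧ (∀ A ∈ 𝒜, (F ∩ A).Nonempty) ∧
      (∀ F' : Set X, IsClosed F' → F' ⊆ F → (∀ A ∈ 𝒜, (F' ∩ A).Nonempty) → F' = F)) ∧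
    ∀ F : Set X, IsClosed F → (∀ A ∈ 𝒜, (F ∩ A).Nonempty) →
      (∀ F' : Set X, IsClosed F' → F' ⊆ F → (∀ A ∈ 𝒜, (F' ∩ A).Nonempty) → F' = F) →
      F.Nonempty ∧
        ∀ F₁ F₂ : Set X, IsClosed F₁ → IsClosed F₂ → F ⊆ F₁ ∪ F₂ → F ⊆ F₁ ∨ F ⊆ F₂ := by
  constructor
  · obtain ⟨F, hFC, hF⟩ := exists_minimal_closed_inter_nonempty_subset
      (fun A hA => (hfilt A hA A hA).imp fun _ h => ⟨h.1, h.2.1⟩) hC hmeets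
    exact ⟨F, hFC, hF.prop.1, hF.prop.2, fun F' hF' hF'F hF'meets =>
      hF.eq_of_subset ⟨hF', hF'meets⟩ hF'F⟩
  · intro F hF hFmeets hFmin
    have hirr := isIrreducible_of_minimal_closed_inter_nonempty hne hfilt
      ⟨⟨hF, hFmeets⟩, fun F' hF' hF'F => (hFmin F' hF'.1 hF'F hF'.2).ge⟩
    exact ⟨hirr.nonempty, isPreirreducible_iff_isClosed_union_isClosed.1 hirr.isPreirreducible⟩

/-- Rudin-type lemma: a closed set meeting all members of a ≪-filtered family contains a
minimal closed set meeting all members, and any such minimal closed set is irreducible. -/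
theorem stmt1 (X : Type*) [TopologicalSpace X] [T0Space X]
    (𝒜 : Set (Set X)) (hne : 𝒜.Nonempty)
    (hfilt : ∀ A₁ ∈ 𝒜, ∀ A₂ ∈ 𝒜, ∃ A₃ ∈ 𝒜, RelCpt A₃ A₁ ∧ RelCpt A₃ A₂)
    (C : Set X) (hC : IsClosed C) (hmeets : ∀ A ∈ 𝒜, (C ∩ A).Nonempty) :
    (∃ F : Set X, F ⊆ C ∧ IsClosed F ∧ (∀ A ∈ 𝒜, (F ∩ A).Nonempty) ∧
      (∀ F' : Set X, IsClosed F' → F' ⊆ F → (∀ A ∈ 𝒜, (F' ∩ A).Nonempty) → F' = F)) ∧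
    ∀ F : Set X, IsClosed F → (∀ A ∈ 𝒜, (F ∩ A).Nonempty) →
      (∀ F' : Set X, IsClosed F' → F' ⊆ F → (∀ A ∈ 𝒜, (F' ∩ A).Nonempty) → F' = F) →
      F.Nonempty ∧
        ∀ F₁ F₂ : Set X, IsClosed F₁ → IsClosed F₂ → F ⊆ F₁ ∪ F₂ → F ⊆ F₁ ∨ F ⊆ F₂ :=
  stmt1_general X 𝒜 hne hfilt C hC hmeets
end

section
/- If X is a saturated well-filtered T0 space and {Aᵢ : i ∈ I} is a ≪-filtered family of nonempty saturated subsets of X, then ⋂ᵢ Aᵢ is a nonempty compact saturated set. -/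
open Set

/-- In a saturated well-filtered space, the intersection of a ≪-filtered family of nonempty
saturated sets is nonempty, compact and saturated. -/
theorem stmt5 (X : Type*) [TopologicalSpace X] [T0Space X] (h : SatWellFiltered X)
    (𝒜 : Set (Set X)) (hne : 𝒜.Nonempty)
    (hsat : ∀ A ∈ 𝒜, Saturated A) (hAne : ∀ A ∈ 𝒜, A.Nonempty)
    (hfilt : ∀ A₁ ∈ 𝒜, ∀ A₂ ∈ 𝒜, ∃ A₃ ∈ 𝒜, RelCpt A₃ A₁ ∧ RelCpt A₃ A₂) :
    (⋂₀ 𝒜).Nonempty ∧ IsCompact (⋂₀ 𝒜) ∧ Saturated (⋂₀ 𝒜) := by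
  have hinter : ∀ U : Set X, IsOpen U → ⋂₀ 𝒜 ⊆ U → ∃ A ∈ 𝒜, A ⊆ U :=
    fun U hU hsub => h 𝒜 hne (fun A hA => hsat A hA) hfilt U hU hsub
  refine ⟨?_, ?_, ?_⟩
  · by_contra hemp
    rw [Set.not_nonempty_iff_eq_empty] at hemp
    obtain ⟨A, hA, hsubA⟩ := hinter ∅ isOpen_empty (by rw [hemp])
    exact (hAne A hA).ne_empty (Set.subset_empty_iff.mp hsubA)
  · apply isCompact_of_finite_subcover
    intro ι U hUopen hcov
    obtain ⟨A, hA, hAsub⟩ := hinter (⋃ i, U i) (isOpen_iUnion hUopen) hcov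
    obtain ⟨A₃, hA₃, ⟨_, hrc2⟩, -⟩ := hfilt A hA A hA
    obtain ⟨𝒱, h𝒱sub, h𝒱fin, hA₃sub⟩ := hrc2 (Set.range U)
      (by rintro _ ⟨i, rfl⟩; exact hUopen i)
      (by rwa [Set.sUnion_range])
    have hg : ∀ V : 𝒱, ∃ i, U i = (V : Set X) := fun V => h𝒱sub V.2
    choose g hgU using hg
    haveI : Fintype 𝒱 := h𝒱fin.fintype
    classical
    refine ⟨Finset.univ.image g, fun x hx => ?_⟩
    have hxA₃ : x ∈ A₃ := hx A₃ hA₃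
    obtain ⟨V, hV𝒱, hxV⟩ := hA₃sub hxA₃
    refine Set.mem_biUnion (Finset.mem_image.2 ⟨⟨V, hV𝒱⟩, Finset.mem_univ _, rfl⟩) ?_
    rw [hgU ⟨V, hV𝒱⟩]; exact hxV
  · apply Set.Subset.antisymm
    · intro x hx V hV
      exact hV.2 hx
    · intro x hx A hA
      rw [hsat A hA]
      intro V hV
      exact hx V ⟨hV.1, fun y hy => hV.2 (hy A hA)⟩
end

section
/- Every saturated ω-well-filtered T0 space is ω-well-filtered, and conversely every ω-well-filtered T0 space is saturated ω-well-filtered; i.e., the two notions coincide. -/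
/-! Given a `≪`-filtered sequence of saturated sets `Aₙ` none of which lies in the open set
`U ⊇ ⋂ Aₙ`, first thin it out to a `≪`-descending sequence `Bₙ`. By Zorn's lemma, `U` extends to an
open set `W` that is maximal among open sets containing no `Bₙ`; by maximality, every open set not
contained in `W` contains `Bₙ \ W` for some `n`. Hence a sequence of points `gₙ ∈ Bₙ \ W` converges to
each of its own terms, so its tails have compact saturations `Kₙ ⊆ Bₙ`. These form a descending
sequence of compact saturated sets with `⋂ Kₙ ⊆ W`, while `gₙ ∈ Kₙ \ W`: ω-well-filteredness fails. -/

open Set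

open Filter Topology

section

variable {X : Type*} [TopologicalSpace X]

theorem saturated_iff_nhdsKer_eq {A : Set X} : Saturated A ↔ nhdsKer A = A := by
  rw [Saturated, nhdsKer_def, eq_comm]

theorem IsCompact.relCpt {A B : Set X} (hA : IsCompact A) (hAB : A ⊆ B) : RelCpt A B := by
  refine ⟨hAB, fun 𝒰 hopen hcov => ?_⟩
  rw [sUnion_eq_biUnion] at hcov
  obtain ⟨𝒱, h𝒱𝒰, h𝒱, hA𝒱⟩ := hA.elim_finite_subcover_image hopen (hAB.trans hcov)
  exact ⟨𝒱, h𝒱𝒰, h𝒱, by rwa [sUnion_eq_biUnion]⟩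

theorem RelCpt.exists_subset_of_subset_sUnion {A B : Set X} (h : RelCpt A B)
    {c : Set (Set X)} (hc : ∀ U ∈ c, IsOpen U) (hne : c.Nonempty) (hdir : DirectedOn (· ⊆ ·) c)
    (hB : B ⊆ ⋃₀ c) : ∃ U ∈ c, A ⊆ U := by
  classical
  obtain ⟨𝒱, h𝒱c, h𝒱, hA𝒱⟩ := h.2 c hc hB
  obtain ⟨M, hMc, hM⟩ := Finset.sup_le_of_le_directed c hne hdir h𝒱.toFinset
    fun V hV => ⟨V, h𝒱c (h𝒱.mem_toFinset.1 hV), le_rfl⟩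
  refine ⟨M, hMc, hA𝒱.trans ?_⟩
  rintro x ⟨V, hV, hxV⟩
  exact hM (Finset.le_sup (f := id) (h𝒱.mem_toFinset.2 hV) hxV)

theorem exists_reindex_relCpt_succ {A : ℕ → Set X}
    (hA : ∀ m n, ∃ k, RelCpt (A k) (A m) ∧ RelCpt (A k) (A n)) :
    ∃ φ : ℕ → ℕ, (∀ n, RelCpt (A (φ (n + 1))) (A (φ n))) ∧ ∀ n, A (φ n) ⊆ A n := by
  choose f hf using hA
  let φ : ℕ → ℕ := fun n => Nat.rec 0 (fun m k => f k (m + 1)) n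
  refine ⟨φ, fun n => (hf _ _).1, ?_⟩
  rintro (_ | n)
  · exact subset_rfl
  · exact (hf _ _).2.1

theorem exists_maximal_isOpen_forall_not_subset {B : ℕ → Set X}
    (hB : ∀ n, RelCpt (B (n + 1)) (B n)) {U : Set X} (hU : IsOpen U) (hBU : ∀ n, ¬ B n ⊆ U) :
    ∃ W, U ⊆ W ∧ Maximal (fun V => IsOpen V ∧ ∀ n, ¬ B n ⊆ V) W := by
  refine zorn_subset_nonempty _ (fun c hcS hchain hne => ?_) U ⟨hU, hBU⟩
  refine ⟨⋃₀ c, ⟨isOpen_sUnion fun V hV => (hcS hV).1, fun n hn => ?_⟩,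
    fun _ => subset_sUnion_of_mem⟩
  obtain ⟨V, hVc, hV⟩ := (hB n).exists_subset_of_subset_sUnion (fun V hV => (hcS hV).1) hne
    hchain.directedOn hn
  exact (hcS hVc).2 (n + 1) hV

theorem tendsto_of_maximal_isOpen_forall_not_subset {B : ℕ → Set X} (hB : Antitone B)
    {W : Set X} (hW : Maximal (fun V => IsOpen V ∧ ∀ n, ¬ B n ⊆ V) W)
    {g : ℕ → X} (hg : ∀ n, g n ∈ B n \ W) (k : ℕ) : Tendsto g atTop (𝓝 (g k)) := by
  refine tendsto_nhds.2 fun V hV hgV => ?_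
  obtain ⟨n, hn⟩ : ∃ n, B n ⊆ W ∪ V := by
    by_contra! h
    exact (hg k).2 (hW.le_of_ge ⟨hW.prop.1.union hV, h⟩ subset_union_left (Or.inr hgV))
  filter_upwards [eventually_ge_atTop n] with m hm
  exact (hn (hB hm (hg m).1)).resolve_left (hg m).2

theorem OmegaWellFiltered.exists_subset_of_relCpt_succ (hX : OmegaWellFiltered X)
    {B : ℕ → Set X} (hsat : ∀ n, Saturated (B n)) (hB : ∀ n, RelCpt (B (n + 1)) (B n))
    {U : Set X} (hU : IsOpen U) (hBU : ⋂ n, B n ⊆ U) : ∃ n, B n ⊆ U := by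
  by_contra! hne
  obtain ⟨W, hUW, hW⟩ := exists_maximal_isOpen_forall_not_subset hB hU hne
  choose g hg using fun n => not_subset.1 (hW.prop.2 n)
  have hanti : Antitone B := antitone_nat_of_succ_le fun n => (hB n).1
  let K n := nhdsKer (range fun m => g (m + n))
  have hgK n : g n ∈ K n := subset_nhdsKer ⟨0, by simp⟩
  have hK n : IsCompact (K n) ∧ Saturated (K n) := by
    refine ⟨IsCompact.nhdsKer ?_, saturated_iff_nhdsKer_eq.2 (nhdsKer_nhdsKer _)⟩
    have := ((tendsto_of_maximal_isOpen_forall_not_subset hanti hW hg n).comp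
      (tendsto_add_atTop_nat n)).isCompact_insert_range
    rwa [insert_eq_of_mem (mem_range.2 ⟨0, by simp⟩)] at this
  have hKanti : Antitone K := fun m n hmn => nhdsKer_mono <| by
    rintro _ ⟨k, rfl⟩
    exact ⟨k + (n - m), congrArg g (by omega)⟩
  have hKB n : K n ⊆ B n := by
    rw [← saturated_iff_nhdsKer_eq.1 (hsat n)]
    refine nhdsKer_mono ?_
    rintro _ ⟨m, rfl⟩
    exact hanti (Nat.le_add_left n m) (hg (m + n)).1
  obtain ⟨n, hn⟩ := hX K hK (fun m n => ⟨max m n, hKanti (le_max_left m n),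
    hKanti (le_max_right m n)⟩) W hW.prop.1 ((iInter_mono hKB).trans (hBU.trans hUW))
  exact (hg n).2 (hn (hgK n))

theorem SatOmegaWellFiltered.omegaWellFiltered (h : SatOmegaWellFiltered X) :
    OmegaWellFiltered X := fun K hK hdir U hU hKU =>
  h K (fun n => (hK n).2) (fun m n =>
    let ⟨k, hkm, hkn⟩ := hdir m n
    ⟨k, (hK k).1.relCpt hkm, (hK k).1.relCpt hkn⟩) U hU hKU

theorem OmegaWellFiltered.satOmegaWellFiltered (h : OmegaWellFiltered X) :
    SatOmegaWellFiltered X := by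
  intro A hsat hdir U hU hAU
  obtain ⟨φ, hφ, hφA⟩ := exists_reindex_relCpt_succ hdir
  obtain ⟨n, hn⟩ := h.exists_subset_of_relCpt_succ (fun n => hsat (φ n)) hφ hU
    ((iInter_mono hφA).trans hAU)
  exact ⟨φ n, hn⟩

end

theorem stmt6_general (X : Type*) [TopologicalSpace X] :
    SatOmegaWellFiltered X ↔ OmegaWellFiltered X :=
  ⟨SatOmegaWellFiltered.omegaWellFiltered, OmegaWellFiltered.satOmegaWellFiltered⟩

/-- The saturated ω-well-filtered spaces are exactly the ω-well-filtered spaces. -/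
theorem stmt6 (X : Type*) [TopologicalSpace X] [T0Space X] :
    SatOmegaWellFiltered X ↔ OmegaWellFiltered X :=
  stmt6_general X
end

section
/- A T0 space is well-filtered if and only if it is saturated well-filtered. -/
/-!
Compact saturated sets are ≪-below every superset, so saturated well-filteredness implies
well-filteredness. Conversely, in a well-filtered space the intersection of a ≪-descending
sequence of saturated sets `A n` is compact: if it lay in an open `W` while no `A n` did, a
minimal closed set `E ⊆ Wᶜ` meeting every `A n` (Zorn, with `A (n+1) ≪ A n` making intersections
of chains meet every `A n`) gives points `x n ∈ E ∩ A n` whose tails are compact, since the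
sequence converges to each of its terms; their saturations then contradict well-filteredness.
A ≪-filtered family `𝒜` is then replaced by the filtered family of intersections of
≪-descending sequences in `𝒜`, to which well-filteredness applies.
-/

open Set

open Filter Topology

section Saturation

variable {X : Type*} [TopologicalSpace X]

def saturation (S : Set X) : Set X := ⋂₀ {U : Set X | IsOpen U ∧ S ⊆ U}

theorem subset_saturation (S : Set X) : S ⊆ saturation S :=
  fun _ hx _ hU => hU.2 hx

theorem saturation_subset_of_isOpen {S U : Set X} (hU : IsOpen U) (hSU : S ⊆ U) :
    saturation S ⊆ U :=
  sInter_subset_of_mem ⟨hU, hSU⟩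

theorem saturation_mono {S T : Set X} (h : S ⊆ T) : saturation S ⊆ saturation T :=
  fun _ hx _ hU => hx _ ⟨hU.1, h.trans hU.2⟩

theorem saturated_iff_saturation_subset {A : Set X} : Saturated A ↔ saturation A ⊆ A :=
  ⟨fun h => h.symm.subset, fun h => (subset_saturation A).antisymm h⟩

theorem saturated_saturation (S : Set X) : Saturated (saturation S) :=
  saturated_iff_saturation_subset.2 fun _ hx _ hU =>
    hx _ ⟨hU.1, saturation_subset_of_isOpen hU.1 hU.2⟩

theorem Saturated.saturation_subset {S A : Set X} (hA : Saturated A) (h : S ⊆ A) :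
    saturation S ⊆ A :=
  (saturation_mono h).trans (saturated_iff_saturation_subset.1 hA)

theorem saturated_iInter {ι : Sort*} {A : ι → Set X} (hA : ∀ i, Saturated (A i)) :
    Saturated (⋂ i, A i) :=
  saturated_iff_saturation_subset.2 <| subset_iInter fun i =>
    (hA i).saturation_subset (iInter_subset A i)

theorem IsCompact.saturation {S : Set X} (hS : IsCompact S) : IsCompact (saturation S) := by
  refine isCompact_of_finite_subcover fun U hU hcover => ?_
  obtain ⟨t, ht⟩ := hS.elim_finite_subcover U hU ((subset_saturation S).trans hcover)
  exact ⟨t, saturation_subset_of_isOpen (isOpen_biUnion fun i _ => hU i) ht⟩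

end Saturation

section RelCpt

variable {X : Type*} [TopologicalSpace X] {A B K : Set X}

theorem IsCompact.relCpt_s7 (hK : IsCompact K) (hKB : K ⊆ B) : RelCpt K B := by
  refine ⟨hKB, fun 𝒰 h𝒰 hB𝒰 => ?_⟩
  obtain ⟨𝒱, h𝒱𝒰, h𝒱, hK𝒱⟩ := hK.elim_finite_subcover_image (c := id) h𝒰
    (by simpa [← sUnion_eq_biUnion] using hKB.trans hB𝒰)
  exact ⟨𝒱, h𝒱𝒰, h𝒱, by simpa [sUnion_eq_biUnion] using hK𝒱⟩

theorem RelCpt.elim_finite_subcover {ι : Type*} (h : RelCpt A B) {U : ι → Set X}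
    (hU : ∀ i, IsOpen (U i)) (hBU : B ⊆ ⋃ i, U i) : ∃ t : Finset ι, A ⊆ ⋃ i ∈ t, U i := by
  obtain ⟨𝒱, h𝒱U, h𝒱, hA𝒱⟩ := h.2 (range U) (forall_mem_range.2 hU) (by rwa [sUnion_range])
  rw [← image_univ] at h𝒱U
  obtain ⟨t, -, ht, hAt⟩ := exists_subset_image_finite_and (p := fun 𝒲 => A ⊆ ⋃₀ 𝒲) |>.1
    ⟨𝒱, h𝒱U, h𝒱, hA𝒱⟩
  exact ⟨ht.toFinset, by simpa [sUnion_image] using hAt⟩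

theorem RelCpt.elim_directed_cover {ι : Type*} [Nonempty ι] (h : RelCpt A B) {U : ι → Set X}
    (hU : ∀ i, IsOpen (U i)) (hBU : B ⊆ ⋃ i, U i) (hdir : Directed (· ⊆ ·) U) :
    ∃ i, A ⊆ U i := by
  obtain ⟨t, ht⟩ := h.elim_finite_subcover hU hBU
  obtain ⟨i, hi⟩ := hdir.finset_le t
  exact ⟨i, ht.trans (iUnion₂_subset fun j hj => hi j hj)⟩

theorem RelCpt.sInter_inter_nonempty (h : RelCpt A B) {𝒞 : Set (Set X)}
    (h𝒞 : ∀ C ∈ 𝒞, IsClosed C) (hchain : IsChain (· ⊆ ·) 𝒞) (hne : 𝒞.Nonempty)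
    (hA : ∀ C ∈ 𝒞, (C ∩ A).Nonempty) : (⋂₀ 𝒞 ∩ B).Nonempty := by
  by_contra! hempty
  have : Nonempty 𝒞 := hne.to_subtype
  obtain ⟨C, hAC⟩ := h.elim_directed_cover (U := fun C : 𝒞 => (C : Set X)ᶜ)
    (fun C => (h𝒞 C C.2).isOpen_compl)
    (by simpa [compl_sInter, sUnion_image]
      using (disjoint_iff_inter_eq_empty.2 hempty).subset_compl_left)
    (fun C D => (hchain.total C.2 D.2).elim
      (fun hCD => ⟨C, subset_rfl, compl_subset_compl.2 hCD⟩)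
      (fun hDC => ⟨D, compl_subset_compl.2 hDC, subset_rfl⟩))
  obtain ⟨x, hxC, hxA⟩ := hA C C.2
  exact hAC hxA hxC

end RelCpt

section WellFiltered

variable {X : Type*} [TopologicalSpace X]

theorem WellFiltered.exists_subset_of_antitone (hX : WellFiltered X) {K : ℕ → Set X}
    (hK : ∀ n, IsCompact (K n) ∧ Saturated (K n)) (hanti : Antitone K) {W : Set X}
    (hW : IsOpen W) (hKW : ⋂ n, K n ⊆ W) : ∃ n, K n ⊆ W := by
  obtain ⟨_, ⟨n, rfl⟩, hn⟩ := hX (range K) (range_nonempty K) (forall_mem_range.2 hK)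
    (forall_mem_range.2 fun m => forall_mem_range.2 fun n =>
      ⟨K (max m n), mem_range_self _, hanti (le_max_left m n), hanti (le_max_right m n)⟩)
    W hW (by rwa [sInter_range])
  exact ⟨n, hn⟩

variable {A : ℕ → Set X}

theorem exists_minimal_isClosed_inter_nonempty (hA : ∀ n, RelCpt (A (n + 1)) (A n))
    {F : Set X} (hF : IsClosed F) (hFA : ∀ n, (F ∩ A n).Nonempty) :
    ∃ E ⊆ F, Minimal (fun C => IsClosed C ∧ ∀ n, (C ∩ A n).Nonempty) E :=
  zorn_superset_nonempty {C | IsClosed C ∧ ∀ n, (C ∩ A n).Nonempty}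
    (fun 𝒞 h𝒞 hchain hne => ⟨⋂₀ 𝒞,
      ⟨isClosed_sInter fun _ hC => (h𝒞 hC).1, fun n => (hA n).sInter_inter_nonempty
        (fun _ hC => (h𝒞 hC).1) hchain hne fun _ hC => (h𝒞 hC).2 (n + 1)⟩,
      fun _ => sInter_subset_of_mem⟩)
    F ⟨hF, hFA⟩

theorem Minimal.exists_inter_subset_of_isOpen {E : Set X}
    (hE : Minimal (fun C => IsClosed C ∧ ∀ n, (C ∩ A n).Nonempty) E) {V : Set X}
    (hV : IsOpen V) (hVE : (V ∩ E).Nonempty) : ∃ k, E ∩ A k ⊆ V := by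
  by_contra! hnot
  have hEV : E ⊆ E \ V := hE.le_of_le ⟨hE.prop.1.sdiff hV, fun k => ?_⟩ sdiff_subset
  · obtain ⟨y, hyV, hyE⟩ := hVE
    exact (hEV hyE).2 hyV
  · obtain ⟨y, ⟨hyE, hyA⟩, hyV⟩ := not_subset.1 (hnot k)
    exact ⟨y, ⟨hyE, hyV⟩, hyA⟩

theorem tendsto_nhds_of_forall_isOpen_exists_inter_subset (hanti : Antitone A) {E : Set X}
    (hE : ∀ V, IsOpen V → (V ∩ E).Nonempty → ∃ k, E ∩ A k ⊆ V) {x : ℕ → X}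
    (hx : ∀ n, x n ∈ E ∩ A n) {y : X} (hy : y ∈ E) : Tendsto x atTop (𝓝 y) := by
  refine tendsto_nhds.2 fun V hV hyV => ?_
  obtain ⟨k, hk⟩ := hE V hV ⟨y, hyV, hy⟩
  exact eventually_atTop.2 ⟨k, fun m hm => hk ⟨(hx m).1, hanti hm (hx m).2⟩⟩

theorem WellFiltered.exists_subset_of_relCpt_succ (hX : WellFiltered X)
    (hsat : ∀ n, Saturated (A n)) (hA : ∀ n, RelCpt (A (n + 1)) (A n)) {W : Set X}
    (hW : IsOpen W) (hAW : ⋂ n, A n ⊆ W) : ∃ n, A n ⊆ W := by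
  by_contra! hnot
  have hanti : Antitone A := antitone_nat_of_succ_le fun n => (hA n).1
  obtain ⟨E, hEW, hE⟩ := exists_minimal_isClosed_inter_nonempty hA hW.isClosed_compl
    fun n => (inter_comm _ _ ▸ sdiff_nonempty.2 (hnot n) : (Wᶜ ∩ A n).Nonempty)
  choose x hx using hE.prop.2
  have hlim : ∀ n, Tendsto x atTop (𝓝 (x n)) := fun n =>
    tendsto_nhds_of_forall_isOpen_exists_inter_subset hanti
      (fun _ hV => hE.exists_inter_subset_of_isOpen hV) hx (hx n).1
  let K : ℕ → Set X := fun n => saturation (range fun m => x (m + n))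
  have hxK : ∀ n, x n ∈ range fun m => x (m + n) := fun n => ⟨0, by simp⟩
  have hK : ∀ n, IsCompact (K n) ∧ Saturated (K n) := fun n =>
    ⟨(insert_eq_of_mem (hxK n) ▸
      ((hlim n).comp (tendsto_add_atTop_nat n)).isCompact_insert_range).saturation,
    saturated_saturation _⟩
  have hKanti : Antitone K := antitone_nat_of_succ_le fun n =>
    saturation_mono (range_subset_iff.2 fun m => ⟨m + 1, congrArg x (Nat.add_right_comm m 1 n)⟩)
  have hKA : ∀ n, K n ⊆ A n := fun n =>
    (hsat n).saturation_subset (range_subset_iff.2 fun m => hanti (Nat.le_add_left n m) (hx _).2)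
  obtain ⟨n, hn⟩ := hX.exists_subset_of_antitone hK hKanti hW ((iInter_mono hKA).trans hAW)
  exact hEW (hx n).1 (hn (subset_saturation _ (hxK n)))

theorem WellFiltered.isCompact_iInter_of_relCpt_succ (hX : WellFiltered X)
    (hsat : ∀ n, Saturated (A n)) (hA : ∀ n, RelCpt (A (n + 1)) (A n)) :
    IsCompact (⋂ n, A n) := by
  refine isCompact_of_finite_subcover fun U hU hcover => ?_
  obtain ⟨n, hn⟩ := hX.exists_subset_of_relCpt_succ hsat hA (isOpen_iUnion hU) hcover
  obtain ⟨t, ht⟩ := (hA n).elim_finite_subcover hU hn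
  exact ⟨t, (iInter_subset A (n + 1)).trans ht⟩

end WellFiltered

section Filtered

variable {X : Type*} [TopologicalSpace X]

theorem exists_relCpt_succ_seq_subset {𝒜 : Set (Set X)}
    (hdir : ∀ A₁ ∈ 𝒜, ∀ A₂ ∈ 𝒜, ∃ A₃ ∈ 𝒜, RelCpt A₃ A₁ ∧ RelCpt A₃ A₂)
    {B : ℕ → Set X} (hB : ∀ n, B n ∈ 𝒜) :
    ∃ f : ℕ → Set X, (∀ n, f n ∈ 𝒜) ∧ (∀ n, RelCpt (f (n + 1)) (f n)) ∧ ∀ n, f n ⊆ B n := by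
  choose! p hp𝒜 hp₁ hp₂ using hdir
  let f : ℕ → Set X := fun n => Nat.rec (B 0) (fun n F => p F (B (n + 1))) n
  have hf𝒜 : ∀ n, f n ∈ 𝒜 := fun n => by
    induction n with
    | zero => exact hB 0
    | succ n ih => exact hp𝒜 _ ih _ (hB (n + 1))
  refine ⟨f, hf𝒜, fun n => hp₁ _ (hf𝒜 n) _ (hB (n + 1)), fun n => ?_⟩
  cases n with
  | zero => exact subset_rfl
  | succ n => exact (hp₂ _ (hf𝒜 n) _ (hB (n + 1))).1

theorem WellFiltered.satWellFiltered (hX : WellFiltered X) : SatWellFiltered X := by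
  intro 𝒜 h𝒜 hsat hdir U hU h𝒜U
  let 𝒬 : Set (Set X) := {Q | ∃ f : ℕ → Set X,
    (∀ n, f n ∈ 𝒜) ∧ (∀ n, RelCpt (f (n + 1)) (f n)) ∧ Q = ⋂ n, f n}
  have h𝒬𝒜 : ∀ A ∈ 𝒜, ∃ Q ∈ 𝒬, Q ⊆ A := fun A hA => by
    obtain ⟨f, hf𝒜, hf, hfA⟩ := exists_relCpt_succ_seq_subset hdir fun _ => hA
    exact ⟨_, ⟨f, hf𝒜, hf, rfl⟩, (iInter_subset f 0).trans (hfA 0)⟩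
  have h𝒬dir : ∀ Q₁ ∈ 𝒬, ∀ Q₂ ∈ 𝒬, ∃ Q₃ ∈ 𝒬, Q₃ ⊆ Q₁ ∧ Q₃ ⊆ Q₂ := by
    rintro _ ⟨f₁, hf₁𝒜, -, rfl⟩ _ ⟨f₂, hf₂𝒜, -, rfl⟩
    choose B hB𝒜 hB₁ hB₂ using fun n => hdir _ (hf₁𝒜 n) _ (hf₂𝒜 n)
    obtain ⟨f, hf𝒜, hf, hfB⟩ := exists_relCpt_succ_seq_subset hdir hB𝒜
    exact ⟨_, ⟨f, hf𝒜, hf, rfl⟩, iInter_mono fun n => (hfB n).trans (hB₁ n).1,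
      iInter_mono fun n => (hfB n).trans (hB₂ n).1⟩
  have h𝒬cpt : ∀ Q ∈ 𝒬, IsCompact Q ∧ Saturated Q := by
    rintro _ ⟨f, hf𝒜, hf, rfl⟩
    exact ⟨hX.isCompact_iInter_of_relCpt_succ (fun n => hsat _ (hf𝒜 n)) hf,
      saturated_iInter fun n => hsat _ (hf𝒜 n)⟩
  have h𝒬U : ⋂₀ 𝒬 ⊆ U := fun x hx => h𝒜U fun A hA =>
    let ⟨Q, hQ, hQA⟩ := h𝒬𝒜 A hA
    hQA (hx Q hQ)
  obtain ⟨A, hA⟩ := h𝒜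
  obtain ⟨Q, hQ, -⟩ := h𝒬𝒜 A hA
  obtain ⟨_, ⟨f, hf𝒜, hf, rfl⟩, hfU⟩ := hX 𝒬 ⟨Q, hQ⟩ h𝒬cpt h𝒬dir U hU h𝒬U
  obtain ⟨n, hn⟩ := hX.exists_subset_of_relCpt_succ (fun n => hsat _ (hf𝒜 n)) hf hU hfU
  exact ⟨f n, hf𝒜 n, hn⟩

theorem SatWellFiltered.wellFiltered (hX : SatWellFiltered X) : WellFiltered X := by
  intro 𝒦 h𝒦 hcpt hdir U hU h𝒦U
  refine hX 𝒦 h𝒦 (fun K hK => (hcpt K hK).2) (fun K₁ hK₁ K₂ hK₂ => ?_) U hU h𝒦U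
  obtain ⟨K₃, hK₃, h₁, h₂⟩ := hdir K₁ hK₁ K₂ hK₂
  exact ⟨K₃, hK₃, (hcpt K₃ hK₃).1.relCpt_s7 h₁, (hcpt K₃ hK₃).1.relCpt_s7 h₂⟩

end Filtered

theorem stmt7_general (X : Type*) [TopologicalSpace X] :
    WellFiltered X ↔ SatWellFiltered X :=
  ⟨WellFiltered.satWellFiltered, SatWellFiltered.wellFiltered⟩

/-- A T0 space is well-filtered iff it is saturated well-filtered. -/
theorem stmt7 (X : Type*) [TopologicalSpace X] [T0Space X] :
    WellFiltered X ↔ SatWellFiltered X :=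
  stmt7_general X
end

section
/- If X is an open well-filtered T0 space and {Uᵢ : i ∈ I} is a nonempty ≪-filtered family of nonempty open subsets of X, then ⋂ᵢ Uᵢ is a nonempty compact saturated set. -/
open Set

/-- In an open well-filtered space, the intersection of a nonempty ≪-filtered family of
nonempty open sets is nonempty, compact and saturated. -/
theorem stmt9 (X : Type*) [TopologicalSpace X] [T0Space X] (h : OpenWellFiltered X)
    (𝒜 : Set (Set X)) (hne : 𝒜.Nonempty)
    (hop : ∀ A ∈ 𝒜, IsOpen A) (hAne : ∀ A ∈ 𝒜, A.Nonempty)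
    (hfilt : ∀ A₁ ∈ 𝒜, ∀ A₂ ∈ 𝒜, ∃ A₃ ∈ 𝒜, RelCpt A₃ A₁ ∧ RelCpt A₃ A₂) :
    (⋂₀ 𝒜).Nonempty ∧ IsCompact (⋂₀ 𝒜) ∧ Saturated (⋂₀ 𝒜) := by
  refine ⟨?_, ?_, ?_⟩
  · by_contra hempty
    rw [Set.not_nonempty_iff_eq_empty] at hempty
    obtain ⟨A, hA, hAsub⟩ := h 𝒜 hne hop hfilt ∅ isOpen_empty (by rw [hempty])
    exact (hAne A hA).ne_empty (Set.subset_empty_iff.mp hAsub)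
  · rw [isCompact_iff_finite_subcover]
    intro ι U hU hcov
    have hUnion : IsOpen (⋃ i, U i) := isOpen_iUnion hU
    obtain ⟨A, hA, hAsub⟩ := h 𝒜 hne hop hfilt (⋃ i, U i) hUnion hcov
    obtain ⟨A₃, hA₃, hrc, -⟩ := hfilt A hA A hA
    obtain ⟨-, hfin⟩ := hrc
    obtain ⟨𝒱, h𝒱sub, h𝒱fin, h𝒱cov⟩ := hfin (Set.range U)
      (by rintro _ ⟨i, rfl⟩; exact hU i)
      (by rwa [Set.sUnion_range])
    -- choose indices for each member of 𝒱
    have : ∀ V ∈ 𝒱, ∃ i, U i = V := fun V hV => h𝒱sub hV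
    choose f hf using this
    classical
    obtain ⟨s, hs⟩ := h𝒱fin.exists_finset_coe
    refine ⟨s.attach.image (fun v => f v.1 (hs ▸ Finset.mem_coe.mpr v.2)), ?_⟩
    intro x hx
    have hxA₃ : x ∈ A₃ := hx A₃ hA₃
    obtain ⟨V, hV, hxV⟩ := h𝒱cov hxA₃
    have hVs : V ∈ s := by rw [← Finset.mem_coe, hs]; exact hV
    simp only [Set.mem_iUnion]
    refine ⟨f V (by rw [← Finset.mem_coe, hs] at hVs; exact hVs), ?_, ?_⟩
    · exact Finset.mem_image.mpr ⟨⟨V, hVs⟩, Finset.mem_attach _ _, rfl⟩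
    · rw [hf]; exact hxV
  · apply Set.Subset.antisymm
    · intro x hx W hW
      exact hW.2 hx
    · intro x hx A hA
      exact hx A ⟨hop A hA, Set.sInter_subset_of_mem hA⟩
end

section
/- Every core-compact open well-filtered T0 space is sober. -/
open Set

lemma relCpt_of_subset {X : Type*} [TopologicalSpace X] {A B C : Set X}
    (h : RelCpt A B) (hbc : B ⊆ C) : RelCpt A C :=
  ⟨h.1.trans hbc, fun 𝒰 ho hcov => h.2 𝒰 ho (hbc.trans hcov)⟩

/-- Every core-compact open well-filtered space is sober. -/
theorem stmt10 (X : Type*) [TopologicalSpace X] [T0Space X]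
    (hcc : CoreCompact X) (howf : OpenWellFiltered X) : Sober X := by
  intro F hFc hFne hFirr
  set 𝒜 : Set (Set X) := {U | IsOpen U ∧ (U ∩ F).Nonempty} with h𝒜
  have hmeet : ∀ U₁ ∈ 𝒜, ∀ U₂ ∈ 𝒜, ((U₁ ∩ U₂) ∩ F).Nonempty := by
    intro U₁ h1 U₂ h2
    by_contra h
    rw [Set.not_nonempty_iff_eq_empty] at h
    have hsub : F ⊆ U₁ᶜ ∪ U₂ᶜ := by
      intro y hy
      by_contra hy'
      simp only [Set.mem_union, Set.mem_compl_iff, not_or, not_not] at hy'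
      exact (Set.eq_empty_iff_forall_notMem.mp h y) ⟨⟨hy'.1, hy'.2⟩, hy⟩
    rcases hFirr U₁ᶜ U₂ᶜ h1.1.isClosed_compl h2.1.isClosed_compl hsub with h' | h'
    · rcases h1.2 with ⟨y, hy1, hy2⟩; exact h' hy2 hy1
    · rcases h2.2 with ⟨y, hy1, hy2⟩; exact h' hy2 hy1
  have hfilt : ∀ U₁ ∈ 𝒜, ∀ U₂ ∈ 𝒜, ∃ U₃ ∈ 𝒜, RelCpt U₃ U₁ ∧ RelCpt U₃ U₂ := by
    intro U₁ h1 U₂ h2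
    obtain ⟨z, hz, hzF⟩ := hmeet U₁ h1 U₂ h2
    obtain ⟨V, hVo, hzV, hVrc⟩ := hcc z (U₁ ∩ U₂) (h1.1.inter h2.1) hz
    exact ⟨V, ⟨hVo, ⟨z, hzV, hzF⟩⟩,
      relCpt_of_subset hVrc Set.inter_subset_left,
      relCpt_of_subset hVrc Set.inter_subset_right⟩
  have hnot : ¬ (⋂₀ 𝒜 ⊆ Fᶜ) := by
    intro h
    obtain ⟨A, hA, hsub⟩ := howf 𝒜 ⟨Set.univ, isOpen_univ, by simpa using hFne⟩
      (fun A hA => hA.1) hfilt Fᶜ hFc.isOpen_compl h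
    rcases hA.2 with ⟨y, hy1, hy2⟩
    exact hsub hy1 hy2
  obtain ⟨x, hx1, hx2⟩ := Set.not_subset.mp hnot
  have hxF : x ∈ F := not_not.mp hx2
  have hFeq : F = closure {x} := by
    apply Set.Subset.antisymm
    · intro y hy
      by_contra hy'
      have hmem : (closure {x})ᶜ ∈ 𝒜 := ⟨isClosed_closure.isOpen_compl, ⟨y, hy', hy⟩⟩
      exact (hx1 _ hmem) (subset_closure rfl)
    · exact closure_minimal (Set.singleton_subset_iff.mpr hxF) hFc
  refine ⟨x, hFeq, fun y hy => ?_⟩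
  have : closure ({y} : Set X) = closure {x} := by rw [← hy, hFeq]
  exact ((inseparable_iff_closure_eq).mpr this).eq
end

section
/- Every core-compact open ω-well-filtered T0 space is locally compact, i.e., for every point x and open set U containing x there is a compact saturated set Q and an open set W with x ∈ W ⊆ Q ⊆ U. -/
open Set

/-!
Given `x ∈ V ≪ U` with `V` open, core-compactness lets one interpolate open sets
`U = A₀ ≫ A₁ ≫ A₂ ≫ ⋯ ≫ V`. The intersection `Q = ⋂ Aₙ` is saturated and contains `V`.
It is compact: an open set containing `Q` contains some `Aₙ` by open ω-well-filteredness,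
and then `Aₙ₊₁ ≪ Aₙ` extracts a finite subcover of `Aₙ₊₁ ⊇ Q`.
-/

namespace RelCpt

variable {X : Type*} [TopologicalSpace X]

lemma mono_left {A A' B : Set X} (h : A ⊆ A') (hA' : RelCpt A' B) : RelCpt A B :=
  ⟨h.trans hA'.1, fun 𝒰 h𝒰 hB => by
    obtain ⟨𝒱, h𝒱𝒰, h𝒱, hA'𝒱⟩ := hA'.2 𝒰 h𝒰 hB
    exact ⟨𝒱, h𝒱𝒰, h𝒱, h.trans hA'𝒱⟩⟩

lemma mono_right {A B B' : Set X} (hA : RelCpt A B) (h : B ⊆ B') : RelCpt A B' :=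
  ⟨hA.1.trans h, fun 𝒰 h𝒰 hB' => hA.2 𝒰 h𝒰 (h.trans hB')⟩

lemma empty (B : Set X) : RelCpt ∅ B :=
  ⟨empty_subset B, fun _ _ _ => ⟨∅, empty_subset _, finite_empty, empty_subset _⟩⟩

lemma union {A A' B : Set X} (hA : RelCpt A B) (hA' : RelCpt A' B) : RelCpt (A ∪ A') B := by
  refine ⟨union_subset hA.1 hA'.1, fun 𝒰 h𝒰 hB => ?_⟩
  obtain ⟨𝒱, h𝒱𝒰, h𝒱, hA𝒱⟩ := hA.2 𝒰 h𝒰 hB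
  obtain ⟨𝒱', h𝒱'𝒰, h𝒱', hA'𝒱'⟩ := hA'.2 𝒰 h𝒰 hB
  refine ⟨𝒱 ∪ 𝒱', union_subset h𝒱𝒰 h𝒱'𝒰, h𝒱.union h𝒱', ?_⟩
  rw [sUnion_union]
  exact union_subset_union hA𝒱 hA'𝒱'

lemma biUnion_finset {ι : Type*} {A : ι → Set X} {B : Set X} (t : Finset ι)
    (h : ∀ i ∈ t, RelCpt (A i) B) : RelCpt (⋃ i ∈ t, A i) B := by
  classical
  induction t using Finset.induction_on with
  | empty => simpa using empty B
  | insert i t _ ih =>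
    rw [Finset.set_biUnion_insert]
    exact (h i (t.mem_insert_self i)).union (ih fun j hj => h j (Finset.mem_insert_of_mem hj))

lemma exists_finset_subcover {ι : Type*} {A B : Set X} (h : RelCpt A B) (U : ι → Set X)
    (hU : ∀ i, IsOpen (U i)) (hB : B ⊆ ⋃ i, U i) : ∃ t : Finset ι, A ⊆ ⋃ i ∈ t, U i := by
  obtain ⟨𝒱, h𝒱U, h𝒱, hA𝒱⟩ := h.2 (range U) (forall_mem_range.2 hU) (by rwa [sUnion_range])
  rw [← image_univ] at h𝒱U
  obtain ⟨s, -, hs, hAs⟩ :=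
    (exists_subset_image_finite_and (p := fun 𝒱 => A ⊆ ⋃₀ 𝒱)).1 ⟨𝒱, h𝒱U, h𝒱, hA𝒱⟩
  exact ⟨hs.toFinset, by simpa [sUnion_image] using hAs⟩

end RelCpt

lemma isCompact_of_forall_isOpen_exists_relCpt {X : Type*} [TopologicalSpace X] {K : Set X}
    (h : ∀ U, IsOpen U → K ⊆ U → ∃ A B, K ⊆ A ∧ RelCpt A B ∧ B ⊆ U) : IsCompact K :=
  isCompact_of_finite_subcover fun U hU hKU => by
    obtain ⟨A, B, hKA, hAB, hBU⟩ := h (⋃ i, U i) (isOpen_iUnion hU) hKU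
    obtain ⟨t, ht⟩ := hAB.exists_finset_subcover U hU hBU
    exact ⟨t, hKA.trans ht⟩

lemma saturated_iInter_of_isOpen {X ι : Type*} [TopologicalSpace X] {A : ι → Set X}
    (hA : ∀ i, IsOpen (A i)) : Saturated (⋂ i, A i) :=
  (subset_sInter fun _ hO => hO.2).antisymm
    (subset_iInter fun i => sInter_subset_of_mem ⟨hA i, iInter_subset A i⟩)

namespace CoreCompact

variable {X : Type*} [TopologicalSpace X]

lemma exists_isOpen_relCpt_relCpt (hX : CoreCompact X) {V U : Set X} (hU : IsOpen U)
    (hVU : RelCpt V U) : ∃ W, IsOpen W ∧ RelCpt V W ∧ RelCpt W U := by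
  choose! f hf hyf hfU using fun y (hy : y ∈ U) => hX y U hU hy
  choose! g hg hyg hgf using fun y (hy : y ∈ U) => hX y (f y) (hf y hy) (hyf y hy)
  obtain ⟨t, hVt⟩ := hVU.exists_finset_subcover (fun y : U => g y) (fun y => hg y y.2)
    (fun y hy => mem_iUnion.2 ⟨⟨y, hy⟩, hyg y hy⟩)
  refine ⟨⋃ y ∈ t, f y, isOpen_biUnion fun y _ => hf y y.2, ?_,
    RelCpt.biUnion_finset t fun y _ => hfU y y.2⟩
  refine RelCpt.mono_left hVt (RelCpt.biUnion_finset t fun y hy => ?_)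
  exact (hgf y y.2).mono_right (subset_biUnion_of_mem (u := fun y : U => f y) hy)

lemma exists_relCpt_chain (hX : CoreCompact X) {V U : Set X} (hU : IsOpen U)
    (hVU : RelCpt V U) : ∃ A : ℕ → Set X, A 0 = U ∧ (∀ n, IsOpen (A n)) ∧
      (∀ n, RelCpt V (A n)) ∧ ∀ n, RelCpt (A (n + 1)) (A n) := by
  choose! next hnext hVnext hnextW using
    fun W (hW : IsOpen W ∧ RelCpt V W) => hX.exists_isOpen_relCpt_relCpt hW.1 hW.2
  have hA : ∀ n, IsOpen (next^[n] U) ∧ RelCpt V (next^[n] U) := by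
    intro n
    induction n with
    | zero => exact ⟨hU, hVU⟩
    | succ n ih =>
      rw [Function.iterate_succ_apply']
      exact ⟨hnext _ ih, hVnext _ ih⟩
  refine ⟨fun n => next^[n] U, rfl, fun n => (hA n).1, fun n => (hA n).2, fun n => ?_⟩
  dsimp only
  rw [Function.iterate_succ_apply']
  exact hnextW _ (hA n)

end CoreCompact

lemma OpenOmegaWellFiltered.isCompact_iInter {X : Type*} [TopologicalSpace X]
    (hX : OpenOmegaWellFiltered X) {A : ℕ → Set X} (hA : ∀ n, IsOpen (A n))
    (hAA : ∀ n, RelCpt (A (n + 1)) (A n)) : IsCompact (⋂ n, A n) := by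
  have hanti : Antitone A := antitone_nat_of_succ_le fun n => (hAA n).1
  have hdir : ∀ m n, ∃ k, RelCpt (A k) (A m) ∧ RelCpt (A k) (A n) := fun m n =>
    ⟨max m n + 1, (hAA m).mono_left (hanti (by omega)), (hAA n).mono_left (hanti (by omega))⟩
  refine isCompact_of_forall_isOpen_exists_relCpt fun U hU hAU => ?_
  obtain ⟨n, hnU⟩ := hX A hA hdir U hU hAU
  exact ⟨A (n + 1), A n, iInter_subset A _, hAA n, hnU⟩

theorem stmt12_general (X : Type*) [TopologicalSpace X]
    (hcc : CoreCompact X) (howf : OpenOmegaWellFiltered X) :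
    ∀ (x : X) (U : Set X), IsOpen U → x ∈ U →
      ∃ W Q : Set X, IsOpen W ∧ IsCompact Q ∧ Saturated Q ∧ x ∈ W ∧ W ⊆ Q ∧ Q ⊆ U := by
  intro x U hU hxU
  obtain ⟨V, hV, hxV, hVU⟩ := hcc x U hU hxU
  obtain ⟨A, hA0, hA, hVA, hAA⟩ := hcc.exists_relCpt_chain hU hVU
  refine ⟨V, ⋂ n, A n, hV, howf.isCompact_iInter hA hAA, saturated_iInter_of_isOpen hA, hxV,
    subset_iInter fun n => (hVA n).1, ?_⟩
  exact hA0 ▸ iInter_subset A 0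

/-- Every core-compact open ω-well-filtered space is locally compact. -/
theorem stmt12 (X : Type*) [TopologicalSpace X] [T0Space X]
    (hcc : CoreCompact X) (howf : OpenOmegaWellFiltered X) :
    ∀ (x : X) (U : Set X), IsOpen U → x ∈ U →
      ∃ W Q : Set X, IsOpen W ∧ IsCompact Q ∧ Saturated Q ∧ x ∈ W ∧ W ⊆ Q ∧ Q ⊆ U :=
  stmt12_general X hcc howf
end

section
/- If X is an ω-well-filtered T0 space and D is a countable directed subset of X (under the specialization order), then D has a supremum in X. -/
open Set

/-- The specialization order: `x ≤ y` iff `x ∈ cl {y}`. -/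
def SpecLE {X : Type*} [TopologicalSpace X] (x y : X) : Prop := x ∈ closure {y}

namespace Stmt14Aux
variable {X : Type*} [TopologicalSpace X]

def up (x : X) : Set X := {y | x ∈ closure ({y} : Set X)}

lemma mem_up_iff {x y : X} : y ∈ up x ↔ ∀ U : Set X, IsOpen U → x ∈ U → y ∈ U := by
  constructor
  · intro hy U hU hx
    rcases mem_closure_iff.mp hy U hU hx with ⟨z, hzU, hz⟩
    rcases hz with rfl
    exact hzU
  · intro hy
    exact mem_closure_iff.mpr fun o ho hxo => ⟨y, hy o ho hxo, rfl⟩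

lemma self_mem_up (x : X) : x ∈ up x := subset_closure rfl

lemma up_subset_of_open {x : X} {U : Set X} (hU : IsOpen U) (hx : x ∈ U) : up x ⊆ U :=
  fun _ hy => mem_up_iff.mp hy U hU hx

lemma up_compact (x : X) : IsCompact (up x) := by
  apply isCompact_of_finite_subcover
  intro ι U hU hcov
  rcases mem_iUnion.mp (hcov (self_mem_up x)) with ⟨i, hi⟩
  exact ⟨{i}, fun y hy => mem_iUnion₂.mpr ⟨i, Finset.mem_singleton_self i,
    up_subset_of_open (hU i) hi hy⟩⟩

lemma up_saturated (x : X) : Saturated (up x) := by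
  apply Set.Subset.antisymm
  · intro y hy U hU
    exact hU.2 hy
  · intro y hy
    exact mem_up_iff.mpr fun U hU hx => hy U ⟨hU, up_subset_of_open hU hx⟩

lemma specLE_trans {a b c : X} (h1 : SpecLE a b) (h2 : SpecLE b c) : SpecLE a c :=
  closure_minimal (Set.singleton_subset_iff.mpr h2) isClosed_closure h1

lemma up_anti {x y : X} (hxy : SpecLE x y) : up y ⊆ up x :=
  fun _ hz => specLE_trans hxy hz

end Stmt14Aux
/-- In an ω-well-filtered space, every countable directed set (in the specialization
order) has a supremum. -/
theorem stmt14 (X : Type*) [TopologicalSpace X] [T0Space X] (h : OmegaWellFiltered X)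
    (D : Set X) (hcnt : D.Countable) (hne : D.Nonempty)
    (hdir : ∀ a ∈ D, ∀ b ∈ D, ∃ c ∈ D, SpecLE a c ∧ SpecLE b c) :
    ∃ s : X, (∀ d ∈ D, SpecLE d s) ∧ ∀ b : X, (∀ d ∈ D, SpecLE d b) → SpecLE s b := by
  classical
  obtain ⟨f, hf⟩ := Set.Countable.exists_eq_range hcnt hne
  have hfD : ∀ n, f n ∈ D := fun n => hf ▸ Set.mem_range_self n
  choose c hcD hc1 hc2 using hdir
  let x : ℕ → {a : X // a ∈ D} := fun n =>
    Nat.rec ⟨f 0, hfD 0⟩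
      (fun n p => ⟨c p.1 p.2 (f (n + 1)) (hfD (n + 1)), hcD _ _ _ _⟩) n
  have hstep : ∀ n, SpecLE (x n).1 (x (n + 1)).1 := fun n => hc1 _ _ _ _
  have hcof : ∀ n, SpecLE (f n) (x n).1 := by
    intro n
    cases n with
    | zero => exact subset_closure rfl
    | succ n => exact hc2 _ _ _ _
  have hmono : ∀ m n, m ≤ n → SpecLE (x m).1 (x n).1 := by
    intro m n hmn
    induction hmn with
    | refl => exact subset_closure rfl
    | step _ ih => exact Stmt14Aux.specLE_trans ih (hstep _)
  set K : ℕ → Set X := fun n => Stmt14Aux.up (x n).1 with hK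
  have hKcs : ∀ n, IsCompact (K n) ∧ Saturated (K n) := fun n =>
    ⟨Stmt14Aux.up_compact _, Stmt14Aux.up_saturated _⟩
  have hKfil : ∀ m n : ℕ, ∃ k, K k ⊆ K m ∧ K k ⊆ K n := fun m n =>
    ⟨max m n, Stmt14Aux.up_anti (hmono m _ (le_max_left m n)),
      Stmt14Aux.up_anti (hmono n _ (le_max_right m n))⟩
  have hnotsub : ¬ (⋂ n, K n) ⊆ (closure D)ᶜ := by
    intro hsub
    obtain ⟨n, hn⟩ := h K hKcs hKfil _ (isClosed_closure.isOpen_compl) hsub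
    exact hn (Stmt14Aux.self_mem_up _) (subset_closure (x n).2)
  obtain ⟨s, hs1, hs2⟩ := Set.not_subset.mp hnotsub
  have hsD : s ∈ closure D := not_not.mp hs2
  refine ⟨s, ?_, ?_⟩
  · intro d hd
    obtain ⟨n, rfl⟩ : d ∈ Set.range f := hf ▸ hd
    exact Stmt14Aux.specLE_trans (hcof n) (Set.mem_iInter.mp hs1 n)
  · intro b hb
    exact closure_minimal (fun d hd => hb d hd) isClosed_closure hsD
end

section
/- Let P = J ∪ ℕ where J = ℕ × (ℕ ∪ {ω}) is Johnstone's dcpo, ordered by: x ≤ y for x, y ∈ ℕ iff x ≤ y in ℕ; (m,n) ≤ (m',n') in J iff (m = m' and n ≤ n') or (n' = ω and n ≤ m'); and for x ∈ ℕ, y ∈ J, x ≤ y iff y = (x, ω). Then for every directed subset D of P for which ⋁D exists, either ⋁D ∈ D or D ⊆ J. -/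
open Set

abbrev JJ : Type := ℕ × WithTop ℕ
abbrev PP : Type := JJ ⊕ ℕ

/-- The order on `J = ℕ × (ℕ ∪ {ω})` (Johnstone's dcpo). -/
def jle (a b : JJ) : Prop :=
  (a.1 = b.1 ∧ a.2 ≤ b.2) ∨ (b.2 = ⊤ ∧ a.2 ≤ (b.1 : WithTop ℕ))

/-- The order on `P = J ∪ ℕ`. -/
def ple : PP → PP → Prop
  | Sum.inl a, Sum.inl b => jle a b
  | Sum.inr m, Sum.inr n => m ≤ n
  | Sum.inr m, Sum.inl b => b = (m, (⊤ : WithTop ℕ))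
  | Sum.inl _, Sum.inr _ => False

def dirP (D : Set PP) : Prop :=
  D.Nonempty ∧ ∀ a ∈ D, ∀ b ∈ D, ∃ c ∈ D, ple a c ∧ ple b c

def isLubP (D : Set PP) (s : PP) : Prop :=
  (∀ d ∈ D, ple d s) ∧ ∀ b : PP, (∀ d ∈ D, ple d b) → ple s b

def scottOpenP (U : Set PP) : Prop :=
  (∀ x ∈ U, ∀ y : PP, ple x y → y ∈ U) ∧
  ∀ D : Set PP, dirP D → ∀ s : PP, isLubP D s → s ∈ U → (D ∩ U).Nonempty


lemma jle_top (m : ℕ) (b : JJ) (h : jle (m, ⊤) b) : b = (m, ⊤) := by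
  rcases h with ⟨h1, h2⟩ | ⟨h1, h2⟩
  · obtain ⟨b1, b2⟩ := b
    simp only [Prod.mk.injEq]
    exact ⟨h1.symm, top_le_iff.mp h2⟩
  · exact absurd (top_le_iff.mp h2) (WithTop.coe_ne_top)

/-- For every directed subset `D` of `P` whose sup exists, either `⋁D ∈ D` or `D ⊆ J`. -/
theorem stmt15 (D : Set PP) (hD : dirP D) (s : PP) (hs : isLubP D s) :
    s ∈ D ∨ ∀ x ∈ D, ∃ a : JJ, x = Sum.inl a := by
  by_cases hall : ∀ x ∈ D, ∃ a : JJ, x = Sum.inl a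
  · exact Or.inr hall
  left
  push_neg at hall
  obtain ⟨x, hxD, hx⟩ := hall
  obtain ⟨m, rfl⟩ : ∃ m, x = Sum.inr m := by
    cases x with
    | inl a => exact absurd rfl (hx a)
    | inr m => exact ⟨m, rfl⟩
  by_cases hinl : ∃ a : JJ, Sum.inl a ∈ D
  · obtain ⟨a, haD⟩ := hinl
    obtain ⟨c, hcD, hc1, hc2⟩ := hD.2 _ hxD _ haD
    obtain ⟨b, rfl⟩ : ∃ b : JJ, c = Sum.inl b := by
      cases c with
      | inl b => exact ⟨b, rfl⟩
      | inr n => exact absurd hc2 (by simp [ple])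
    have hb : b = (m, ⊤) := hc1
    subst hb
    have hub : ∀ d ∈ D, ple d (Sum.inl (m, ⊤)) := by
      intro d hdD
      obtain ⟨e, heD, he1, he2⟩ := hD.2 _ hdD _ hcD
      cases e with
      | inr n => exact absurd he2 (by simp [ple])
      | inl eb =>
        have heq := jle_top m eb he2
        rw [heq] at he1
        exact he1
    have h1 := hs.2 _ hub
    have h2 := hs.1 _ hcD
    cases s with
    | inr n => exact absurd h2 (by simp [ple])
    | inl sb =>
      have heq := jle_top m sb h2
      rw [heq]; exact hcD
  · push_neg at hinl
    have hallr : ∀ d ∈ D, ∃ n, d = Sum.inr n := by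
      intro d hdD
      cases d with
      | inl a => exact absurd hdD (hinl a)
      | inr n => exact ⟨n, rfl⟩
    cases s with
    | inl sb =>
      have hb : sb = (m, ⊤) := hs.1 _ hxD
      have hub : ∀ d ∈ D, ple d (Sum.inr m) := by
        intro d hdD
        obtain ⟨n, rfl⟩ := hallr d hdD
        have h2 : sb = (n, (⊤ : WithTop ℕ)) := hs.1 _ hdD
        rw [hb] at h2
        have : n = m := (Prod.mk.injEq _ _ _ _ ▸ h2).1.symm
        simp [ple, this]
      exact absurd (hs.2 _ hub) (by simp [ple])
    | inr k =>
      have hNne : Set.Nonempty {n : ℕ | Sum.inr n ∈ D} := ⟨m, hxD⟩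
      have hNbdd : BddAbove {n : ℕ | Sum.inr n ∈ D} := ⟨k, fun n hn => hs.1 _ hn⟩
      have hM := Nat.sSup_mem hNne hNbdd
      have hub : ∀ d ∈ D, ple d (Sum.inr (sSup {n : ℕ | Sum.inr n ∈ D})) := by
        intro d hdD
        obtain ⟨n, rfl⟩ := hallr d hdD
        exact le_csSup hNbdd hdD
      have h1 : k ≤ sSup {n : ℕ | Sum.inr n ∈ D} := hs.2 _ hub
      have h2 : sSup {n : ℕ | Sum.inr n ∈ D} ≤ k := hs.1 _ hM
      rw [le_antisymm h1 h2]; exact hM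
end

section
/- Let P = J ∪ ℕ be the poset of Example 4 (J = ℕ × (ℕ ∪ {ω}) Johnstone's dcpo, with each k ∈ ℕ below (k, ω) and ℕ ordered as usual). For every nonempty Scott open subset U of P, there exists a minimal n_U ∈ ℕ such that (n, ω) ∈ U for all n ≥ n_U. -/
open Set

/-- The `m`-th column of `J`. -/
def colD (m : ℕ) : Set PP := {x | ∃ k : ℕ, x = Sum.inl (m, (k : WithTop ℕ))}

lemma colD_dir (m : ℕ) : dirP (colD m) := by
  constructor
  · exact ⟨Sum.inl (m, (0 : ℕ)), 0, rfl⟩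
  · rintro a ⟨k1, rfl⟩ b ⟨k2, rfl⟩
    refine ⟨Sum.inl (m, ((max k1 k2 : ℕ) : WithTop ℕ)), ⟨max k1 k2, rfl⟩, ?_, ?_⟩
    · exact Or.inl ⟨rfl, by dsimp only; exact_mod_cast le_max_left k1 k2⟩
    · exact Or.inl ⟨rfl, by dsimp only; exact_mod_cast le_max_right k1 k2⟩

lemma colD_lub (m : ℕ) : isLubP (colD m) (Sum.inl (m, (⊤ : WithTop ℕ))) := by
  constructor
  · rintro d ⟨k, rfl⟩
    exact Or.inl ⟨rfl, le_top⟩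
  · intro b hb
    cases b with
    | inr n => exact absurd (hb _ ⟨0, rfl⟩) (by simp [ple])
    | inl p =>
      obtain ⟨m', y⟩ := p
      by_cases hy : y = ⊤
      · subst hy
        have h := hb _ ⟨m' + 1, rfl⟩
        rcases h with ⟨h1, _⟩ | ⟨_, h2⟩
        · exact Or.inl ⟨h1, le_rfl⟩
        · simp only at h2
          exact absurd (by exact_mod_cast h2) (by omega)
      · -- y finite: cannot be an upper bound
        obtain ⟨yn, rfl⟩ := WithTop.ne_top_iff_exists.mp hy |>.imp (fun a h => h.symm)
        have h := hb _ ⟨yn + 1, rfl⟩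
        rcases h with ⟨_, h2⟩ | ⟨h1, _⟩
        · exact absurd (by dsimp only at h2; exact Nat.cast_le.mp h2 : yn + 1 ≤ yn) (by omega)
        · exact absurd h1 (by simp)

/-- For every nonempty Scott open subset `U` of `P` there is a minimal `n_U` such that
`(n, ω) ∈ U` for all `n ≥ n_U`. -/
theorem stmt16 (U : Set PP) (hU : scottOpenP U) (hne : U.Nonempty) :
    ∃ nU : ℕ, (∀ n : ℕ, nU ≤ n → Sum.inl (n, (⊤ : WithTop ℕ)) ∈ U) ∧
      ∀ k : ℕ, (∀ n : ℕ, k ≤ n → Sum.inl (n, (⊤ : WithTop ℕ)) ∈ U) → nU ≤ k := by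
  obtain ⟨up, hsc⟩ := hU
  -- step 1: some (m, ω) ∈ U
  obtain ⟨x, hx⟩ := hne
  have hsome : ∃ m : ℕ, Sum.inl (m, (⊤ : WithTop ℕ)) ∈ U := by
    cases x with
    | inl p =>
      exact ⟨p.1, up _ hx _ (Or.inl ⟨rfl, le_top⟩)⟩
    | inr n =>
      exact ⟨n, up _ hx _ (by simp [ple])⟩
  obtain ⟨m, hm⟩ := hsome
  -- step 2: some (m, k) ∈ U with k finite; then all (n, ω) with n ≥ k are in U
  obtain ⟨d, hdD, hdU⟩ := hsc (colD m) (colD_dir m) _ (colD_lub m) hm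
  obtain ⟨k, rfl⟩ := hdD
  have hall : ∃ k0 : ℕ, ∀ n : ℕ, k0 ≤ n → Sum.inl (n, (⊤ : WithTop ℕ)) ∈ U := by
    refine ⟨k, fun n hn => up _ hdU _ ?_⟩
    exact Or.inr ⟨rfl, by dsimp only; exact_mod_cast hn⟩
  classical
  refine ⟨Nat.find hall, Nat.find_spec hall, fun k' hk' => Nat.find_le hk'⟩
end

section
/- Let P = J ∪ ℕ be the poset of Example 4. For Scott open sets U, V of P, U ≪ V (in the Scott topology) if and only if U = ∅. Consequently the Scott space of P is an open well-filtered space. -/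
open Set

/-- The Scott topology on `P`. -/
def scottTopP : TopologicalSpace PP where
  IsOpen := scottOpenP
  isOpen_univ := by
    refine ⟨fun _ _ _ _ => trivial, fun D hD _ _ _ => hD.1.imp fun d hd => ⟨hd, trivial⟩⟩
  isOpen_inter := by
    rintro U V ⟨hUu, hUd⟩ ⟨hVu, hVd⟩
    refine ⟨fun x hx y hxy => ⟨hUu x hx.1 y hxy, hVu x hx.2 y hxy⟩, ?_⟩
    intro D hD s hs hsUV
    obtain ⟨d₁, hd₁D, hd₁U⟩ := hUd D hD s hs hsUV.1
    obtain ⟨d₂, hd₂D, hd₂V⟩ := hVd D hD s hs hsUV.2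
    obtain ⟨c, hcD, hc₁, hc₂⟩ := hD.2 d₁ hd₁D d₂ hd₂D
    exact ⟨c, hcD, hUu d₁ hd₁U c hc₁, hVu d₂ hd₂V c hc₂⟩
  isOpen_sUnion := by
    intro S hS
    constructor
    · rintro x ⟨t, htS, hxt⟩ y hxy
      exact ⟨t, htS, (hS t htS).1 x hxt y hxy⟩
    · rintro D hD s hs ⟨t, htS, hst⟩
      obtain ⟨d, hdD, hdt⟩ := (hS t htS).2 D hD s hs hst
      exact ⟨d, hdD, t, htS, hdt⟩

/-!
Scott open sets of `P` are the upper sets `U` such that `(a, ω) ∈ U` forces some `(a, j) ∈ U`.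
For a nonempty such `U`, let `f a` be the least `j` with `(a, j) ∈ U`. The sets `aboveGraph f n`
form an increasing Scott open cover of `P`, and none of them contains `U`, because `U` meets
columns arbitrarily far to the right. So `U ≪ V` forces `U = ∅`, and every `≪`-filtered family
of open sets contains `∅`.
-/

theorem Monotone.exists_sUnion_subset_of_finite_of_subset_range {ι α : Type*} [Preorder ι]
    [IsDirectedOrder ι] [Nonempty ι] {s : ι → Set α}
    (hs : Monotone s) {𝒱 : Set (Set α)} (hfin : 𝒱.Finite) (h𝒱 : 𝒱 ⊆ range s) :
    ∃ N, ⋃₀ 𝒱 ⊆ s N := by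
  rw [← image_univ] at h𝒱
  obtain ⟨t, -, htfin, rfl⟩ := hfin.exists_subset_finite_image_eq h𝒱
  obtain ⟨N, hN⟩ := htfin.bddAbove
  exact ⟨N, sUnion_subset <| forall_mem_image.2 fun n hn => hs (hN hn)⟩

theorem relCpt_empty {X : Type*} [TopologicalSpace X] (B : Set X) : RelCpt ∅ B :=
  ⟨empty_subset B, fun _ _ _ => ⟨∅, empty_subset _, finite_empty, empty_subset _⟩⟩

open Sum

@[elab_as_elim]
theorem PP.rec_top_coe {motive : PP → Prop} (inr : ∀ m, motive (inr m))
    (top : ∀ a, motive (inl (a, ⊤))) (coe : ∀ a j : ℕ, motive (inl (a, (j : WithTop ℕ)))) :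
    ∀ x, motive x := by
  rintro (⟨a, _ | j⟩ | m)
  exacts [top a, coe a j, inr m]

@[simp] theorem not_ple_inl_inr (p : JJ) (m : ℕ) : ¬ ple (inl p) (inr m) := id

@[simp] theorem ple_inr_inr {m n : ℕ} : ple (inr m) (inr n) ↔ m ≤ n := Iff.rfl

@[simp] theorem ple_inr_inl {m : ℕ} {b : JJ} : ple (inr m) (inl b) ↔ b = (m, ⊤) := Iff.rfl

@[simp] theorem ple_coe_coe {a c i k : ℕ} :
    ple (inl (a, (i : WithTop ℕ))) (inl (c, (k : WithTop ℕ))) ↔ a = c ∧ i ≤ k := by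
  simp [ple, jle]

@[simp] theorem not_ple_top_coe (a c k : ℕ) : ¬ ple (inl (a, ⊤)) (inl (c, (k : WithTop ℕ))) := by
  simp [ple, jle]

@[simp] theorem ple_coe_top {a c i : ℕ} :
    ple (inl (a, (i : WithTop ℕ))) (inl (c, ⊤)) ↔ a = c ∨ i ≤ c := by
  simp [ple, jle]

@[simp] theorem ple_top_top {a c : ℕ} : ple (inl (a, ⊤)) (inl (c, ⊤)) ↔ a = c := by
  simp [ple, jle]

theorem mem_of_isLubP_inr {D : Set PP} {m : ℕ} (hD : D.Nonempty) (hs : isLubP D (inr m)) :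
    inr m ∈ D := by
  by_contra hm
  have hlt : ∀ d ∈ D, ∃ k < m, d = inr k := by
    intro d hd
    induction d using PP.rec_top_coe with
    | inr k =>
      refine ⟨k, lt_of_le_of_ne (hs.1 _ hd) ?_, rfl⟩
      rintro rfl
      exact hm hd
    | top c => simpa using hs.1 _ hd
    | coe c i => simpa using hs.1 _ hd
  obtain ⟨k, hk, -⟩ := hlt _ hD.some_mem
  have hub : ∀ d ∈ D, ple d (inr (m - 1)) := by
    intro d hd
    obtain ⟨k, hk, rfl⟩ := hlt d hd
    exact ple_inr_inr.2 (by omega)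
  have := ple_inr_inr.1 (hs.2 _ hub)
  omega

theorem mem_of_isLubP_coe {D : Set PP} {a j : ℕ} (hD : D.Nonempty)
    (hs : isLubP D (inl (a, (j : WithTop ℕ)))) : inl (a, (j : WithTop ℕ)) ∈ D := by
  by_contra hj
  have hlt : ∀ d ∈ D, ∃ i < j, d = inl (a, (i : WithTop ℕ)) := by
    intro d hd
    induction d using PP.rec_top_coe with
    | inr k => simpa using hs.1 _ hd
    | top c => simpa using hs.1 _ hd
    | coe c i =>
      obtain ⟨rfl, hij⟩ := ple_coe_coe.1 (hs.1 _ hd)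
      refine ⟨i, lt_of_le_of_ne hij ?_, rfl⟩
      rintro rfl
      exact hj hd
  obtain ⟨i, hi, -⟩ := hlt _ hD.some_mem
  have hub : ∀ d ∈ D, ple d (inl (a, ((j - 1 : ℕ) : WithTop ℕ))) := by
    intro d hd
    obtain ⟨i, hi, rfl⟩ := hlt d hd
    exact ple_coe_coe.2 ⟨rfl, by omega⟩
  have := (ple_coe_coe.1 (hs.2 _ hub)).2
  omega

theorem exists_coe_mem_of_isLubP_top {D : Set PP} {a : ℕ} (hD : dirP D)
    (hs : isLubP D (inl (a, ⊤))) (ha : inl (a, ⊤) ∉ D) (k : ℕ) :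
    ∃ j, k ≤ j ∧ inl (a, (j : WithTop ℕ)) ∈ D := by
  have hcoe : ∀ d ∈ D, ∃ c j : ℕ, d = inl (c, (j : WithTop ℕ)) := by
    intro d hd
    induction d using PP.rec_top_coe with
    | inr m =>
      -- `inr m` is the only element of `D` above `inr m`, hence the maximum of `D`
      obtain rfl : m = a := by simpa [eq_comm] using hs.1 _ hd
      have hub : ∀ e ∈ D, ple e (inr m) := by
        intro e he
        obtain ⟨c, hc, hmc, hec⟩ := hD.2 _ hd _ he
        induction c using PP.rec_top_coe with
        | inr m' =>
          obtain rfl : m' = m := by simpa [eq_comm] using hs.1 _ hc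
          exact hec
        | top c' =>
          obtain rfl : m = c' := by simpa [eq_comm] using hmc
          exact absurd hc ha
        | coe c' j => simp at hmc
      exact absurd (hs.2 _ hub) (not_ple_inl_inr _ _)
    | top c =>
      obtain rfl : c = a := ple_top_top.1 (hs.1 _ hd)
      exact absurd hd ha
    | coe c j => exact ⟨c, j, rfl⟩
  obtain ⟨c, j₀, hd₀⟩ := hcoe _ hD.1.some_mem
  have hcol : ∀ d ∈ D, ∃ j : ℕ, d = inl (c, (j : WithTop ℕ)) := by
    intro d hd
    obtain ⟨c', j, rfl⟩ := hcoe d hd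
    obtain ⟨e, he, hde₀, hde⟩ := hD.2 _ hD.1.some_mem _ hd
    obtain ⟨c'', j'', rfl⟩ := hcoe e he
    rw [hd₀, ple_coe_coe] at hde₀
    rw [ple_coe_coe] at hde
    exact ⟨j, by rw [hde.1, hde₀.1]⟩
  by_contra! hbdd
  have hub : ∀ d ∈ D, ple d (inl (c, ((max k a : ℕ) : WithTop ℕ))) := by
    intro d hd
    obtain ⟨j, rfl⟩ := hcol d hd
    refine ple_coe_coe.2 ⟨rfl, ?_⟩
    rcases ple_coe_top.1 (hs.1 _ hd) with rfl | hja
    · exact (not_le.1 fun hkj => hbdd j hkj hd).le.trans (le_max_left _ _)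
    · exact hja.trans (le_max_right _ _)
  exact not_ple_top_coe _ _ _ (hs.2 _ hub)

def column (a : ℕ) : Set PP := range fun j : ℕ => inl (a, (j : WithTop ℕ))

theorem dirP_column (a : ℕ) : dirP (column a) := by
  refine ⟨⟨_, 0, rfl⟩, ?_⟩
  rintro _ ⟨i, rfl⟩ _ ⟨j, rfl⟩
  exact ⟨_, ⟨max i j, rfl⟩, ple_coe_coe.2 ⟨rfl, le_max_left i j⟩,
    ple_coe_coe.2 ⟨rfl, le_max_right i j⟩⟩

theorem isLubP_column (a : ℕ) : isLubP (column a) (inl (a, ⊤)) := by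
  refine ⟨by rintro _ ⟨j, rfl⟩; exact ple_coe_top.2 (Or.inl rfl), fun b hb => ?_⟩
  induction b using PP.rec_top_coe with
  | inr m => simpa using hb _ ⟨0, rfl⟩
  | top c =>
    have := ple_coe_top.1 (hb _ ⟨c + 1, rfl⟩)
    exact ple_top_top.2 (this.resolve_right (by omega))
  | coe c k => exact absurd (ple_coe_coe.1 (hb _ ⟨k + 1, rfl⟩)).2 (by omega)

theorem isLubP_cases {D : Set PP} {s : PP} (hD : dirP D) (hs : isLubP D s) :
    s ∈ D ∨ ∃ a, s = inl (a, ⊤) ∧ ∀ k : ℕ, ∃ j : ℕ, k ≤ j ∧ inl (a, (j : WithTop ℕ)) ∈ D := by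
  induction s using PP.rec_top_coe with
  | inr m => exact Or.inl (mem_of_isLubP_inr hD.1 hs)
  | top a =>
    by_cases ha : inl (a, ⊤) ∈ D
    · exact Or.inl ha
    · exact Or.inr ⟨a, rfl, exists_coe_mem_of_isLubP_top hD hs ha⟩
  | coe a j => exact Or.inl (mem_of_isLubP_coe hD.1 hs)

theorem scottOpenP_iff {U : Set PP} :
    scottOpenP U ↔ (∀ x ∈ U, ∀ y, ple x y → y ∈ U) ∧
      ∀ a, inl (a, ⊤) ∈ U → ∃ j : ℕ, inl (a, (j : WithTop ℕ)) ∈ U := by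
  refine ⟨fun hU => ⟨hU.1, fun a ha => ?_⟩, fun ⟨hup, htop⟩ => ⟨hup, fun D hD s hs hsU => ?_⟩⟩
  · obtain ⟨_, ⟨j, rfl⟩, hj⟩ := hU.2 _ (dirP_column a) _ (isLubP_column a) ha
    exact ⟨j, hj⟩
  · rcases isLubP_cases hD hs with hsD | ⟨a, rfl, hcol⟩
    · exact ⟨s, hsD, hsU⟩
    · obtain ⟨i, hi⟩ := htop a hsU
      obtain ⟨j, hij, hj⟩ := hcol i
      exact ⟨_, hj, hup _ hi _ (ple_coe_coe.2 ⟨rfl, hij⟩)⟩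

theorem exists_coe_mem_of_scottOpenP {U : Set PP} (hU : scottOpenP U) (hne : U.Nonempty)
    (n : ℕ) : ∃ a, n ≤ a ∧ ∃ j : ℕ, inl (a, (j : WithTop ℕ)) ∈ U := by
  obtain ⟨hup, htop⟩ := scottOpenP_iff.1 hU
  obtain ⟨c, hc⟩ : ∃ c, inl (c, ⊤) ∈ U := by
    obtain ⟨x, hx⟩ := hne
    induction x using PP.rec_top_coe with
    | inr m => exact ⟨m, hup _ hx _ rfl⟩
    | top c => exact ⟨c, hx⟩
    | coe c j => exact ⟨j, hup _ hx _ (ple_coe_top.2 (Or.inr le_rfl))⟩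
  obtain ⟨j, hj⟩ := htop c hc
  have hmax : inl (max n j, ⊤) ∈ U := hup _ hj _ (ple_coe_top.2 (Or.inr (le_max_right n j)))
  exact ⟨max n j, le_max_left n j, htop _ hmax⟩

def aboveGraph (f : ℕ → ℕ) (n : ℕ) : Set PP :=
  {x | ∀ a j : ℕ, x = inl (a, (j : WithTop ℕ)) → n < a → f a < j}

theorem scottOpenP_aboveGraph (f : ℕ → ℕ) (n : ℕ) : scottOpenP (aboveGraph f n) := by
  refine scottOpenP_iff.2 ⟨fun x hx y hxy => ?_, fun a _ => ⟨f a + 1, ?_⟩⟩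
  · rintro a j rfl
    induction x using PP.rec_top_coe with
    | inr m => simp at hxy
    | top c => exact absurd hxy (not_ple_top_coe _ _ _)
    | coe c i =>
      obtain ⟨rfl, hij⟩ := ple_coe_coe.1 hxy
      exact fun hn => (hx c i rfl hn).trans_le hij
  · rintro a' j' h -
    simp only [inl.injEq, Prod.mk.injEq] at h
    obtain ⟨rfl, h⟩ := h
    have : f a + 1 = j' := by exact_mod_cast h
    omega

theorem aboveGraph_mono (f : ℕ → ℕ) : Monotone (aboveGraph f) :=
  fun _ _ hnm _ hx a j hxa hma => hx a j hxa (hnm.trans_lt hma)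

theorem iUnion_aboveGraph (f : ℕ → ℕ) : ⋃ n, aboveGraph f n = univ := by
  refine eq_univ_of_forall fun x => mem_iUnion.2 ?_
  induction x using PP.rec_top_coe with
  | inr m => exact ⟨0, fun a j h => by simp at h⟩
  | top c => exact ⟨0, fun a j h => by simp at h⟩
  | coe c i =>
    refine ⟨c, fun a j h hca => ?_⟩
    simp only [inl.injEq, Prod.mk.injEq] at h
    omega

theorem eq_empty_of_relCpt {U V : Set PP} (hU : scottOpenP U) (hUV : @RelCpt PP scottTopP U V) :
    U = ∅ := by
  refine eq_empty_iff_forall_notMem.2 fun x hx => ?_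
  let f : ℕ → ℕ := fun a => sInf {j : ℕ | inl (a, (j : WithTop ℕ)) ∈ U}
  obtain ⟨𝒱, h𝒱, h𝒱fin, hU𝒱⟩ := hUV.2 (range (aboveGraph f))
    (forall_mem_range.2 (scottOpenP_aboveGraph f))
    (by rw [sUnion_range, iUnion_aboveGraph]; exact subset_univ V)
  obtain ⟨N, hN⟩ := (aboveGraph_mono f).exists_sUnion_subset_of_finite_of_subset_range h𝒱fin h𝒱
  obtain ⟨a, haN, j, hj⟩ := exists_coe_mem_of_scottOpenP hU ⟨x, hx⟩ (N + 1)
  have hfa : f a ∈ {j : ℕ | inl (a, (j : WithTop ℕ)) ∈ U} := Nat.sInf_mem ⟨j, hj⟩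
  exact lt_irrefl _ (hN (hU𝒱 hfa) a (f a) rfl haN)

/-- For Scott open subsets `U, V` of `P`, `U ≪ V` iff `U = ∅`; consequently the Scott
space of `P` is open well-filtered. -/
theorem stmt17 :
    (∀ U V : Set PP, scottOpenP U → scottOpenP V →
      (@RelCpt PP scottTopP U V ↔ U = ∅)) ∧
    @OpenWellFiltered PP scottTopP := by
  refine ⟨fun U V hU _ =>
    ⟨eq_empty_of_relCpt hU, fun hU₀ => hU₀ ▸ @relCpt_empty PP scottTopP V⟩, ?_⟩
  rintro 𝒜 ⟨A, hA⟩ hopen hfilt U - -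
  obtain ⟨A₀, hA₀, hA₀A, -⟩ := hfilt A hA A hA
  exact ⟨A₀, hA₀, (eq_empty_of_relCpt (hopen A₀ hA₀) hA₀A).symm ▸ empty_subset U⟩
end
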